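/- Set ρ := min_{i∈[r]} min_{x∈T_i} w(x, S_i)/w(x), and assume ρ ≥ 8α² and that for all i ≠ j in [r] and every x ∈ T_i, w(x, S_j) ≤ (ρ/8)·w(x). Then for any i ≠ j in [r], any x ∈ T_i, and any integer t with 1 ≤ t ≤ ρ/(8α²), one has (((1/2)·I_N + (1/2)·Ā)^t g_i)_x − (((1/2)·I_N + (1/2)·Ā)^t g_j)_x ≥ (1/4)·ρ·√(w(x)). -/
import Mathlib


open Finset Matrix

/-- The degree `w(x) = ∑_{x'} w(x,x')` of a vertex in the positive-pair graph. -/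
noncomputable def deg {N : ℕ} (w : Fin N → Fin N → ℝ) (x : Fin N) : ℝ := ∑ x', w x x'

/-- The normalized adjacency matrix `Ā` with entries `w(x,x')/√(w(x)w(x'))`. -/
noncomputable def nadj {N : ℕ} (w : Fin N → Fin N → ℝ) : Matrix (Fin N) (Fin N) ℝ :=
  Matrix.of fun x x' => w x x' / Real.sqrt (deg w x * deg w x')

/-- The vector with entry `√(w(x))` on a subset `A` and `0` elsewhere. -/
noncomputable def hvec {N : ℕ} (w : Fin N → Fin N → ℝ) (A : Finset (Fin N)) :
    Fin N → ℝ :=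
  fun x => if x ∈ A then Real.sqrt (deg w x) else 0

/-- The lazy random-walk matrix `(1/2)·I + (1/2)·Ā`. -/
noncomputable def lazyA {N : ℕ} (w : Fin N → Fin N → ℝ) : Matrix (Fin N) (Fin N) ℝ :=
  ((1 : ℝ) / 2) • (1 : Matrix (Fin N) (Fin N) ℝ) + ((1 : ℝ) / 2) • nadj w

/-- Normalized walk vector: `uv w A t x = ((lazyA w)^t g_A)_x / √(w(x))`. -/
noncomputable def uv {N : ℕ} (w : Fin N → Fin N → ℝ) (A : Finset (Fin N)) (t : ℕ)
    (x : Fin N) : ℝ := ((lazyA w ^ t) *ᵥ hvec w A) x / Real.sqrt (deg w x)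

lemma uv_zero {N : ℕ} (w : Fin N → Fin N → ℝ) (hdeg : ∀ x, 0 < deg w x)
    (A : Finset (Fin N)) (x : Fin N) : uv w A 0 x = if x ∈ A then 1 else 0 := by
  have h : Real.sqrt (deg w x) ≠ 0 := by have := hdeg x; positivity
  simp only [uv, pow_zero, one_mulVec, hvec]
  split <;> simp [h]

lemma uv_succ {N : ℕ} (w : Fin N → Fin N → ℝ) (hdeg : ∀ x, 0 < deg w x)
    (A : Finset (Fin N)) (t : ℕ) (x : Fin N) :
    uv w A (t+1) x
      = (1/2) * uv w A t x + (1/2) * ((∑ y, w x y * uv w A t y) / deg w x) := by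
  have hdx : (0:ℝ) < deg w x := hdeg x
  have hsx : Real.sqrt (deg w x) ≠ 0 := by positivity
  have h1 : ((lazyA w ^ (t+1)) *ᵥ hvec w A) x
      = (lazyA w *ᵥ ((lazyA w ^ t) *ᵥ hvec w A)) x := by
    rw [pow_succ', Matrix.mulVec_mulVec]
  have hg : ∀ y, ((lazyA w ^ t) *ᵥ hvec w A) y = uv w A t y * Real.sqrt (deg w y) := by
    intro y
    have : Real.sqrt (deg w y) ≠ 0 := by have := hdeg y; positivity
    rw [uv, div_mul_cancel₀ _ this]
  have h2 : (lazyA w *ᵥ ((lazyA w ^ t) *ᵥ hvec w A)) x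
      = (1/2) * (uv w A t x * Real.sqrt (deg w x))
        + (1/2) * ((∑ y, w x y * uv w A t y) / Real.sqrt (deg w x)) := by
    rw [Matrix.mulVec, dotProduct]
    have key : ∀ y, lazyA w x y * ((lazyA w ^ t) *ᵥ hvec w A) y
        = (1/2) * (if x = y then uv w A t y * Real.sqrt (deg w y) else 0)
          + (1/2) * (w x y * uv w A t y / Real.sqrt (deg w x)) := by
      intro y
      have hsy : Real.sqrt (deg w y) ≠ 0 := by have := hdeg y; positivity
      rw [hg y]
      simp only [lazyA, Matrix.add_apply, Matrix.smul_apply, Matrix.one_apply, nadj,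
        Matrix.of_apply, smul_eq_mul]
      rw [Real.sqrt_mul (le_of_lt hdx)]
      split
      · field_simp
      · field_simp; ring
    rw [Finset.sum_congr rfl (fun y _ => key y), Finset.sum_add_distrib,
      ← Finset.mul_sum, ← Finset.mul_sum,
      Finset.sum_ite_eq Finset.univ x (fun y => uv w A t y * Real.sqrt (deg w y))]
    simp only [Finset.mem_univ, if_true]
    rw [← Finset.sum_div]
  rw [uv, h1, h2]
  have hss : Real.sqrt (deg w x) * Real.sqrt (deg w x) = deg w x := Real.mul_self_sqrt hdx.le
  field_simp
  ring_nf
  rw [Real.sq_sqrt hdx.le]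
  ring

section props

variable {N : ℕ} {w : Fin N → Fin N → ℝ} (hnn : ∀ x y, 0 ≤ w x y) (hdeg : ∀ x, 0 < deg w x)
include hnn hdeg

lemma uv_nonneg (A : Finset (Fin N)) : ∀ t x, 0 ≤ uv w A t x := by
  intro t
  induction t with
  | zero => intro x; rw [uv_zero w hdeg]; split <;> norm_num
  | succ t ih =>
    intro x
    rw [uv_succ w hdeg]
    have h1 : 0 ≤ ∑ y, w x y * uv w A t y :=
      Finset.sum_nonneg fun y _ => mul_nonneg (hnn x y) (ih y)
    have h2 := ih x
    have h3 := div_nonneg h1 (hdeg x).le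
    linarith

lemma uv_le_one (A : Finset (Fin N)) : ∀ t x, uv w A t x ≤ 1 := by
  intro t
  induction t with
  | zero => intro x; rw [uv_zero w hdeg]; split <;> norm_num
  | succ t ih =>
    intro x
    rw [uv_succ w hdeg]
    have h1 : ∑ y, w x y * uv w A t y ≤ deg w x := by
      calc ∑ y, w x y * uv w A t y ≤ ∑ y, w x y * 1 :=
            Finset.sum_le_sum fun y _ => mul_le_mul_of_nonneg_left (ih y) (hnn x y)
        _ = deg w x := by simp [deg]
    have h2 : (∑ y, w x y * uv w A t y) / deg w x ≤ 1 :=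
      (div_le_one (hdeg x)).2 h1
    nlinarith [ih x]

lemma uv_mono {A B : Finset (Fin N)} (hAB : A ⊆ B) : ∀ t x, uv w A t x ≤ uv w B t x := by
  intro t
  induction t with
  | zero =>
    intro x; rw [uv_zero w hdeg, uv_zero w hdeg]
    by_cases h : x ∈ A
    · simp [h, hAB h]
    · simp only [h, if_false]
      split <;> norm_num
  | succ t ih =>
    intro x
    rw [uv_succ w hdeg, uv_succ w hdeg]
    have h1 : ∑ y, w x y * uv w A t y ≤ ∑ y, w x y * uv w B t y :=
      Finset.sum_le_sum fun y _ => mul_le_mul_of_nonneg_left (ih y) (hnn x y)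
    have := (hdeg x)
    gcongr
    exact ih x

omit hnn in
lemma uv_compl (A : Finset (Fin N)) : ∀ t x, uv w A t x + uv w Aᶜ t x = 1 := by
  intro t
  induction t with
  | zero =>
    intro x; rw [uv_zero w hdeg, uv_zero w hdeg]
    by_cases h : x ∈ A <;> simp [h]
  | succ t ih =>
    intro x
    rw [uv_succ w hdeg, uv_succ w hdeg]
    have h1 : ∑ y, w x y * uv w A t y + ∑ y, w x y * uv w Aᶜ t y = deg w x := by
      rw [← Finset.sum_add_distrib]
      calc (∑ y, (w x y * uv w A t y + w x y * uv w Aᶜ t y)) = ∑ y, w x y := by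
            refine Finset.sum_congr rfl fun y _ => ?_
            rw [← mul_add, ih y, mul_one]
        _ = deg w x := rfl
    have hdx := hdeg x
    field_simp
    nlinarith [ih x]

lemma uv_stay (α : ℝ) (hα1 : α ≤ 1) (A : Finset (Fin N))
    (hA : ∀ x ∈ A, (∑ y ∈ Aᶜ, w x y) ≤ α * deg w x) :
    ∀ t, ∀ x ∈ A, (1 - α/2)^t ≤ uv w A t x := by
  intro t
  induction t with
  | zero => intro x hx; rw [uv_zero w hdeg]; simp [hx]
  | succ t ih =>
    intro x hx
    rw [uv_succ w hdeg]
    have hp : (0:ℝ) ≤ (1 - α/2)^t := pow_nonneg (by linarith) t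
    have hAx : (1 - α) * deg w x ≤ ∑ y ∈ A, w x y := by
      have : (∑ y ∈ A, w x y) + (∑ y ∈ Aᶜ, w x y) = deg w x := by
        rw [Finset.sum_add_sum_compl]; rfl
      nlinarith [hA x hx]
    have h1 : (1 - α/2)^t * ((1-α) * deg w x) ≤ ∑ y, w x y * uv w A t y := by
      calc (1 - α/2)^t * ((1-α) * deg w x) ≤ (1 - α/2)^t * ∑ y ∈ A, w x y := by
            have h0 : (0:ℝ) ≤ 1 - α := by linarith
            nlinarith
        _ = ∑ y ∈ A, w x y * (1 - α/2)^t := by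
            rw [Finset.mul_sum]; exact Finset.sum_congr rfl fun y _ => mul_comm _ _
        _ ≤ ∑ y ∈ A, w x y * uv w A t y :=
            Finset.sum_le_sum fun y hy => mul_le_mul_of_nonneg_left (ih y hy) (hnn x y)
        _ ≤ ∑ y, w x y * uv w A t y := by
            refine Finset.sum_le_sum_of_subset_of_nonneg (Finset.subset_univ A) fun y _ _ =>
              mul_nonneg (hnn x y) (uv_nonneg hnn hdeg A t y)
    have hdx := hdeg x
    have h2 : (1 - α/2)^t * (1-α) ≤ (∑ y, w x y * uv w A t y) / deg w x := by
      rw [le_div_iff₀ hdx]; nlinarith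
    have h3 := ih x hx
    calc (1 - α/2)^(t+1) = (1/2) * (1 - α/2)^t + (1/2) * ((1 - α/2)^t * (1-α)) := by ring
      _ ≤ _ := by gcongr

end props
set_option maxHeartbeats 1000000 in
/-- A lazy random walk of length `1 ≤ t ≤ ρ/(8α²)` started at any
`x ∈ T_i` is noticeably more likely to arrive in `S_i` than in `S_j` (`j ≠ i`). -/
theorem stmt7 {N m r : ℕ} (w : Fin N → Fin N → ℝ)
    (hsymm : ∀ x x', w x x' = w x' x)
    (hnonneg : ∀ x x', 0 ≤ w x x')
    (hsum : ∑ x, ∑ x', w x x' = 1)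
    (hdeg : ∀ x, 0 < deg w x)
    (C : Fin m → Finset (Fin N))
    (hpart : ∀ x : Fin N, ∃! i : Fin m, x ∈ C i)
    (hne : ∀ i : Fin m, (C i).Nonempty)
    (α : ℝ) (hα0 : 0 < α) (hα1 : α < 1)
    (hexp : ∀ i : Fin m, ∀ x ∈ C i, (∑ x' ∈ (C i)ᶜ, w x x') ≤ α * deg w x)
    (hrm : 2 * r ≤ m)
    (S T : Fin r → Finset (Fin N))
    (hS : ∀ i : Fin r, S i = C ⟨i.1, by have := i.isLt; omega⟩)
    (hT : ∀ i : Fin r, T i = C ⟨r + i.1, by have := i.isLt; omega⟩)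
    (ρ : ℝ)
    (hρ : ρ = sInf {v : ℝ | ∃ i : Fin r, ∃ x ∈ T i,
        v = (∑ x' ∈ S i, w x x') / deg w x})
    (hρα : 8 * α ^ 2 ≤ ρ)
    (hcross : ∀ i j : Fin r, i ≠ j → ∀ x ∈ T i,
        (∑ x' ∈ S j, w x x') ≤ ρ / 8 * deg w x) :
    ∀ i j : Fin r, i ≠ j → ∀ x ∈ T i, ∀ t : ℕ, 1 ≤ t → (t : ℝ) ≤ ρ / (8 * α ^ 2) →
      (1 / 4) * ρ * Real.sqrt (deg w x) ≤
        ((lazyA w ^ t) *ᵥ hvec w (S i)) x - ((lazyA w ^ t) *ᵥ hvec w (S j)) x := by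
  intro i j hij x hx t ht1 htT
  obtain ⟨kI, hSi, hkI⟩ : ∃ k : Fin m, S i = C k ∧ (k : ℕ) = i.1 := ⟨_, hS i, rfl⟩
  obtain ⟨kJ, hSj, hkJ⟩ : ∃ k : Fin m, S j = C k ∧ (k : ℕ) = j.1 := ⟨_, hS j, rfl⟩
  obtain ⟨kT, hTi, hkT⟩ : ∃ k : Fin m, T i = C k ∧ (k : ℕ) = r + i.1 := ⟨_, hT i, rfl⟩
  have hdisj : ∀ k l : Fin m, k ≠ l → ∀ y, y ∈ C k → y ∉ C l := by
    intro k l hkl y hy hyl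
    obtain ⟨u, _, huniq⟩ := hpart y
    exact hkl ((huniq k hy).trans (huniq l hyl).symm)
  have hIJ : kI ≠ kJ := by
    intro h; apply hij; apply Fin.ext; rw [← hkI, ← hkJ, h]
  have hIT : kI ≠ kT := by
    intro h; rw [h] at hkI; have := i.isLt; omega
  have hJT : kJ ≠ kT := by
    intro h; rw [h] at hkJ; have := j.isLt; omega
  -- Bernoulli bound
  have bern : ∀ s : ℕ, 1 - (s:ℝ)*(α/2) ≤ (1 - α/2)^s := by
    intro s
    have h := one_add_mul_le_pow (a := -(α/2)) (by linarith) s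
    have e : (1:ℝ) + -(α/2) = 1 - α/2 := by ring
    rw [e] at h; linarith
  -- escape bound: if `y ∉ S j`, the walk from `y` is unlikely to be in `S j`
  have esc : ∀ (s : ℕ) (y : Fin N), y ∉ S j → uv w (S j) s y ≤ (s:ℝ)*(α/2) := by
    intro s y hy
    obtain ⟨k, hk, -⟩ := hpart y
    have hkne : kJ ≠ k := by
      intro h; apply hy; rw [hSj, h]; exact hk
    have hsub : S j ⊆ (C k)ᶜ := by
      intro z hz
      rw [Finset.mem_compl]
      rw [hSj] at hz
      exact hdisj kJ k hkne z hz
    have h1 := uv_mono hnonneg hdeg hsub s y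
    have h2 := uv_compl hdeg (C k) s y
    have h3 := uv_stay hnonneg hdeg α hα1.le (C k) (hexp k) s y hk
    have h4 := bern s
    linarith
  -- lower bound for `ρ`
  have hbdd : BddBelow {v : ℝ | ∃ i : Fin r, ∃ x ∈ T i,
      v = (∑ x' ∈ S i, w x x') / deg w x} := by
    refine ⟨0, ?_⟩
    rintro v ⟨i', x', hx', rfl⟩
    exact div_nonneg (Finset.sum_nonneg fun y _ => hnonneg x' y) (hdeg x').le
  have hρle : ∀ z ∈ T i, ρ * deg w z ≤ ∑ y ∈ S i, w z y := by
    intro z hz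
    have hmem : (∑ y ∈ S i, w z y) / deg w z ∈ {v : ℝ | ∃ i : Fin r, ∃ x ∈ T i,
        v = (∑ x' ∈ S i, w x x') / deg w x} := ⟨i, z, hz, rfl⟩
    have h := csInf_le hbdd hmem
    rw [← hρ] at h
    have := (le_div_iff₀ (hdeg z)).1 h
    linarith
  have hSiT : S i ⊆ (C kT)ᶜ := by
    intro z hz
    rw [Finset.mem_compl]
    rw [hSi] at hz
    exact hdisj kI kT hIT z hz
  have hρα' : ρ ≤ α := by
    have h1 := hρle x hx
    have h2 : ∑ y ∈ S i, w x y ≤ ∑ y ∈ (C kT)ᶜ, w x y :=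
      Finset.sum_le_sum_of_subset_of_nonneg hSiT fun y _ _ => hnonneg x y
    have h3 := hexp kT x (by rw [← hTi]; exact hx)
    have hd := hdeg x
    nlinarith
  have hρ0 : 0 < ρ := lt_of_lt_of_le (by positivity) hρα
  have hsfacts : ∀ s : ℕ, (s:ℝ) ≤ ρ/(8*α^2) → (s:ℝ)*α ≤ 1/8 ∧ (s:ℝ)*α^2 ≤ ρ/8 := by
    intro s hs
    have h8 : (0:ℝ) < 8*α^2 := by positivity
    have h1 : (s:ℝ)*(8*α^2) ≤ ρ := by
      have := (le_div_iff₀ h8).1 hs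
      linarith
    constructor
    · have h2 : 8*((s:ℝ)*α)*α ≤ 1*α := by nlinarith
      have h3 : 8*((s:ℝ)*α) ≤ 1 := le_of_mul_le_mul_right (by linarith) hα0
      linarith
    · nlinarith
  -- the one-step improvement
  have step : ∀ s : ℕ, (s:ℝ)*α ≤ 1/8 → (s:ℝ)*α^2 ≤ ρ/8 →
      (∀ y ∈ T i, 0 ≤ uv w (S i) s y - uv w (S j) s y) →
      ∀ z ∈ T i, ρ/4 ≤ uv w (S i) (s+1) z - uv w (S j) (s+1) z := by
    intro s hs1 hs2 hIH z hz
    have hdz := hdeg z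
    set f : Fin N → ℝ := fun y => w z y * (uv w (S i) s y - uv w (S j) s y) with hf
    -- bounds on f over the four pieces
    have bSi : (1 - (s:ℝ)*α) * (ρ * deg w z) ≤ ∑ y ∈ S i, f y := by
      have hterm : ∀ y ∈ S i, w z y * (1 - (s:ℝ)*α) ≤ f y := by
        intro y hy
        have h1 : (1 - α/2)^s ≤ uv w (S i) s y := by
          rw [hSi] at hy ⊢
          exact uv_stay hnonneg hdeg α hα1.le (C kI) (hexp kI) s y hy
        have hyj : y ∉ S j := by
          rw [hSi] at hy; rw [hSj]; exact hdisj kI kJ hIJ y hy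
        have h2 := esc s y hyj
        have h3 := bern s
        exact mul_le_mul_of_nonneg_left (by linarith) (hnonneg z y)
      calc (1 - (s:ℝ)*α) * (ρ * deg w z)
          ≤ (1 - (s:ℝ)*α) * ∑ y ∈ S i, w z y := by
            have h0 : (0:ℝ) ≤ 1 - (s:ℝ)*α := by linarith
            exact mul_le_mul_of_nonneg_left (hρle z hz) h0
        _ = ∑ y ∈ S i, w z y * (1 - (s:ℝ)*α) := by
            rw [Finset.mul_sum]; exact Finset.sum_congr rfl fun y _ => mul_comm _ _
        _ ≤ ∑ y ∈ S i, f y := Finset.sum_le_sum hterm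
    have bSj : -(ρ/8 * deg w z) ≤ ∑ y ∈ S j, f y := by
      have hterm : ∀ y ∈ S j, -(w z y) ≤ f y := by
        intro y hy
        have h1 := uv_nonneg hnonneg hdeg (S i) s y
        have h2 := uv_le_one hnonneg hdeg (S j) s y
        calc -(w z y) = w z y * (-1) := by ring
          _ ≤ f y := mul_le_mul_of_nonneg_left (by linarith) (hnonneg z y)
      calc -(ρ/8 * deg w z) ≤ -(∑ y ∈ S j, w z y) := by
            have := hcross i j hij z hz; linarith
        _ = ∑ y ∈ S j, -(w z y) := by rw [Finset.sum_neg_distrib]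
        _ ≤ ∑ y ∈ S j, f y := Finset.sum_le_sum hterm
    have bTi : 0 ≤ ∑ y ∈ T i, f y :=
      Finset.sum_nonneg fun y hy => mul_nonneg (hnonneg z y) (hIH y hy)
    set R : Finset (Fin N) := ((Finset.univ \ S i) \ S j) \ T i with hR
    have bR : -(((s:ℝ)*(α/2)) * (α * deg w z)) ≤ ∑ y ∈ R, f y := by
      have hterm : ∀ y ∈ R, w z y * (-((s:ℝ)*(α/2))) ≤ f y := by
        intro y hy
        simp only [hR, Finset.mem_sdiff] at hy
        have h1 := esc s y hy.1.2
        have h2 := uv_nonneg hnonneg hdeg (S i) s y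
        exact mul_le_mul_of_nonneg_left (by linarith) (hnonneg z y)
      have hsubR : R ⊆ (C kT)ᶜ := by
        intro y hy
        simp only [hR, Finset.mem_sdiff] at hy
        rw [Finset.mem_compl, ← hTi]
        exact hy.2
      have hwR : ∑ y ∈ R, w z y ≤ α * deg w z := by
        calc ∑ y ∈ R, w z y ≤ ∑ y ∈ (C kT)ᶜ, w z y :=
              Finset.sum_le_sum_of_subset_of_nonneg hsubR fun y _ _ => hnonneg z y
          _ ≤ α * deg w z := hexp kT z (by rw [← hTi]; exact hz)
      have hs0 : (0:ℝ) ≤ (s:ℝ)*(α/2) := by positivity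
      calc -(((s:ℝ)*(α/2)) * (α * deg w z)) ≤ -(((s:ℝ)*(α/2)) * ∑ y ∈ R, w z y) := by
            have := mul_le_mul_of_nonneg_left hwR hs0
            linarith
        _ = ∑ y ∈ R, w z y * (-((s:ℝ)*(α/2))) := by
            rw [Finset.mul_sum, ← Finset.sum_neg_distrib]
            exact Finset.sum_congr rfl fun y _ => by ring
        _ ≤ ∑ y ∈ R, f y := Finset.sum_le_sum hterm
    -- assemble the total sum
    have hTsub : T i ⊆ (Finset.univ \ S i) \ S j := by
      intro y hy
      rw [hTi] at hy
      simp only [Finset.mem_sdiff, Finset.mem_univ, true_and]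
      exact ⟨hdisj kT kI (Ne.symm hIT) y hy ∘ (by rw [hSi]; exact id),
        hdisj kT kJ (Ne.symm hJT) y hy ∘ (by rw [hSj]; exact id)⟩
    have hJsub : S j ⊆ Finset.univ \ S i := by
      intro y hy
      rw [hSj] at hy
      simp only [Finset.mem_sdiff, Finset.mem_univ, true_and]
      intro hyi; rw [hSi] at hyi
      exact hdisj kJ kI (Ne.symm hIJ) y hy hyi
    have e1 : ∑ y ∈ Finset.univ \ S i, f y + ∑ y ∈ S i, f y = ∑ y, f y :=
      Finset.sum_sdiff (Finset.subset_univ _)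
    have e2 : ∑ y ∈ (Finset.univ \ S i) \ S j, f y + ∑ y ∈ S j, f y
        = ∑ y ∈ Finset.univ \ S i, f y := Finset.sum_sdiff hJsub
    have e3 : ∑ y ∈ R, f y + ∑ y ∈ T i, f y = ∑ y ∈ (Finset.univ \ S i) \ S j, f y :=
      Finset.sum_sdiff hTsub
    have htot : (1 - (s:ℝ)*α) * (ρ * deg w z) - ρ/8 * deg w z
        - ((s:ℝ)*(α/2)) * (α * deg w z) ≤ ∑ y, f y := by linarith
    -- plug into the recursion
    rw [uv_succ w hdeg, uv_succ w hdeg]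
    have hdiff : ∑ y, w z y * uv w (S i) s y - ∑ y, w z y * uv w (S j) s y = ∑ y, f y := by
      rw [← Finset.sum_sub_distrib]
      exact Finset.sum_congr rfl fun y _ => by simp [hf]; ring
    have hdivb : (1 - (s:ℝ)*α) * ρ - ρ/8 - ((s:ℝ)*(α/2)) * α ≤ (∑ y, f y) / deg w z := by
      rw [le_div_iff₀ hdz]
      calc ((1 - (s:ℝ)*α) * ρ - ρ/8 - ((s:ℝ)*(α/2)) * α) * deg w z
          = (1 - (s:ℝ)*α) * (ρ * deg w z) - ρ/8 * deg w z
            - ((s:ℝ)*(α/2)) * (α * deg w z) := by ring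
        _ ≤ ∑ y, f y := htot
    have h0 := hIH z hz
    have hdiv2 : (∑ y, w z y * uv w (S i) s y) / deg w z
        - (∑ y, w z y * uv w (S j) s y) / deg w z = (∑ y, f y) / deg w z := by
      rw [div_sub_div_same, hdiff]
    have harith : ρ/4 ≤ (1/2) * 0
        + (1/2) * ((1 - (s:ℝ)*α) * ρ - ρ/8 - ((s:ℝ)*(α/2)) * α) := by
      nlinarith [mul_le_mul_of_nonneg_right hs1 hρ0.le, hs2, hρ0.le]
    linarith [hdivb, hdiv2]
  -- nonnegativity of the difference on `T i`, by induction
  have hzero : ∀ s : ℕ, (s:ℝ) ≤ ρ/(8*α^2) → ∀ y ∈ T i, 0 ≤ uv w (S i) s y - uv w (S j) s y := by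
    intro s
    induction s with
    | zero =>
      intro _ y hy
      rw [hTi] at hy
      have h1 : y ∉ S i := by rw [hSi]; exact hdisj kT kI (Ne.symm hIT) y hy
      have h2 : y ∉ S j := by rw [hSj]; exact hdisj kT kJ (Ne.symm hJT) y hy
      rw [uv_zero w hdeg, uv_zero w hdeg]
      simp [h1, h2]
    | succ s ih =>
      intro hs y hy
      have hs' : (s:ℝ) ≤ ρ/(8*α^2) := by
        push_cast at hs ⊢; linarith
      obtain ⟨h1, h2⟩ := hsfacts s hs'
      have := step s h1 h2 (ih hs') y hy
      linarith
  -- conclude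
  obtain ⟨s, rfl⟩ : ∃ s, t = s + 1 := ⟨t - 1, by omega⟩
  have hs' : (s:ℝ) ≤ ρ/(8*α^2) := by push_cast at htT ⊢; linarith
  obtain ⟨h1, h2⟩ := hsfacts s hs'
  have final := step s h1 h2 (hzero s hs') x hx
  have hgi : ((lazyA w ^ (s+1)) *ᵥ hvec w (S i)) x
      = uv w (S i) (s+1) x * Real.sqrt (deg w x) := by
    have h : Real.sqrt (deg w x) ≠ 0 := by have := hdeg x; positivity
    rw [uv, div_mul_cancel₀ _ h]
  have hgj : ((lazyA w ^ (s+1)) *ᵥ hvec w (S j)) x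
      = uv w (S j) (s+1) x * Real.sqrt (deg w x) := by
    have h : Real.sqrt (deg w x) ≠ 0 := by have := hdeg x; positivity
    rw [uv, div_mul_cancel₀ _ h]
  rw [hgi, hgj]
  nlinarith [mul_le_mul_of_nonneg_right final (Real.sqrt_nonneg (deg w x))]
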